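/- arXiv:2509.19472 — 2 statements merged into one kernel-verified Lean document; each statement's English description precedes it below -/
import Mathlib

section
/- Let H ∈ ℝ^{m×n} be full rank, and let 𝓗 = {H x : x ∈ ℝ^n} be its column space. For a matrix A ∈ ℝ^{N×m} with A H = 0, define the sampling-strategy refinement operator I^{SS}_{H,A} on an interval [y̲, y̅] ⊆ ℝ^m componentwise by intersecting [y̲_j, y̅_j] with the intervals -(1/A_{i,j}) Σ_{k≠j} A_{i,k}[y̲_k, y̅_k] over all rows i with A_{i,j} ≠ 0. Then for every y ∈ 𝓗 ∩ [y̲, y̅] and every j, the j-th coordinate y_j lies in I^{SS}_{H,A}([y̲, y̅])_j; i.e., 𝓗 ∩ [y̲, y̅] ⊆ I^{SS}_{H,A}([y̲, y̅]). -/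
/-- Lower endpoint of the Minkowski sum `Σ_{k≠j} a_k [y̲_k, y̅_k]`. -/
noncomputable def sumLo {m : ℕ} (a : Fin m → ℝ) (j : Fin m) (yl yu : Fin m → ℝ) : ℝ :=
  ∑ k ∈ Finset.univ.erase j, min (a k * yl k) (a k * yu k)

/-- Upper endpoint of the Minkowski sum `Σ_{k≠j} a_k [y̲_k, y̅_k]`. -/
noncomputable def sumHi {m : ℕ} (a : Fin m → ℝ) (j : Fin m) (yl yu : Fin m → ℝ) : ℝ :=
  ∑ k ∈ Finset.univ.erase j, max (a k * yl k) (a k * yu k)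

/-- Lower endpoint of the interval `-(1/a_j) Σ_{k≠j} a_k [y̲_k, y̅_k]`. -/
noncomputable def refineLo {m : ℕ} (a : Fin m → ℝ) (j : Fin m) (yl yu : Fin m → ℝ) : ℝ :=
  min (-(sumLo a j yl yu) / a j) (-(sumHi a j yl yu) / a j)

/-- Upper endpoint of the interval `-(1/a_j) Σ_{k≠j} a_k [y̲_k, y̅_k]`. -/
noncomputable def refineHi {m : ℕ} (a : Fin m → ℝ) (j : Fin m) (yl yu : Fin m → ℝ) : ℝ :=
  max (-(sumLo a j yl yu) / a j) (-(sumHi a j yl yu) / a j)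

/-- The `j`-th component of the sampling-strategy refinement `I^{SS}_A([y̲,y̅])`:
the original component interval intersected with the refinement intervals of
all rows `i` of `A` with `A_{i,j} ≠ 0`. -/
noncomputable def refineSet {N m : ℕ} (A : Matrix (Fin N) (Fin m) ℝ)
    (yl yu : Fin m → ℝ) (j : Fin m) : Set ℝ :=
  Set.Icc (yl j) (yu j) ∩
    ⋂ i ∈ {i : Fin N | A i j ≠ 0}, Set.Icc (refineLo (A i) j yl yu) (refineHi (A i) j yl yu)

/-- The sampling-strategy refinement contains `𝓗 ∩ [y̲, y̅]`:
every `y = Hx` with `y̲ ≤ y ≤ y̅` satisfies `y_j ∈ I^{SS}_{H,A}([y̲,y̅])_j`. -/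
theorem refineSet_mem_of_col_space {m n N : ℕ}
    (H : Matrix (Fin m) (Fin n) ℝ) (hH : H.rank = n)
    (A : Matrix (Fin N) (Fin m) ℝ) (hAH : A * H = 0)
    (yl yu y : Fin m → ℝ) (hy : ∃ x : Fin n → ℝ, y = H.mulVec x)
    (hlo : yl ≤ y) (hhi : y ≤ yu) :
    ∀ j : Fin m, y j ∈ refineSet A yl yu j := by
  intro j
  obtain ⟨x, rfl⟩ := hy
  have hAy : A.mulVec (H.mulVec x) = 0 := by
    rw [Matrix.mulVec_mulVec, hAH, Matrix.zero_mulVec]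
  set y := H.mulVec x with hydef
  constructor
  · exact ⟨hlo j, hhi j⟩
  · simp only [Set.mem_iInter, Set.mem_setOf_eq]
    intro i hij
    have hrow : ∑ k, A i k * y k = 0 := by
      have := congrFun hAy i
      simpa [Matrix.mulVec, dotProduct] using this
    set s := ∑ k ∈ Finset.univ.erase j, A i k * y k with hs
    have hsplit : A i j * y j + s = 0 := by
      have h2 := Finset.add_sum_erase Finset.univ (fun k => A i k * y k) (Finset.mem_univ j)
      rw [hs]
      linarith [hrow]
    have hyj : y j = -s / A i j := by
      field_simp
      linarith
    have hlo' : sumLo (A i) j yl yu ≤ s := by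
      apply Finset.sum_le_sum
      intro k _
      rcases le_or_gt 0 (A i k) with h | h
      · exact le_trans (min_le_left _ _) (mul_le_mul_of_nonneg_left (hlo k) h)
      · exact le_trans (min_le_right _ _) (mul_le_mul_of_nonpos_left (hhi k) h.le)
    have hhi' : s ≤ sumHi (A i) j yl yu := by
      apply Finset.sum_le_sum
      intro k _
      rcases le_or_gt 0 (A i k) with h | h
      · exact le_trans (mul_le_mul_of_nonneg_left (hhi k) h) (le_max_right _ _)
      · exact le_trans (mul_le_mul_of_nonpos_left (hlo k) h.le) (le_max_left _ _)
    rw [hyj]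
    unfold refineLo refineHi
    rcases lt_or_gt_of_ne hij with h | h
    · constructor
      · exact le_trans (min_le_left _ _) (div_le_div_of_nonpos_of_le h.le (by linarith))
      · exact le_trans (div_le_div_of_nonpos_of_le h.le (by linarith)) (le_max_right _ _)
    · constructor
      · exact le_trans (min_le_right _ _) (div_le_div_of_nonneg_right (by linarith) h.le)
      · exact le_trans (div_le_div_of_nonneg_right (by linarith) h.le) (le_max_left _ _)
end

section
/- The LP refinement is at least as tight as the sampling-strategy refinement: for any full-rank H ∈ ℝ^{m×n}, any A ∈ ℝ^{N×m} with A H = 0, and any interval [y̲, y̅] ⊆ ℝ^m with 𝓗 ∩ [y̲, y̅] ≠ ∅, every point of the form H x with y̲ ≤ H x ≤ y̅ lies in I^{SS}_{H,A}([y̲, y̅]); consequently the componentwise tightest interval containing 𝓗 ∩ [y̲, y̅] (the LP refinement) is contained in I^{SS}_{H,A}([y̲, y̅]). -/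
/-- The feasible set `{x : y̲ ≤ Hx ≤ y̅}`. -/
def feasible {m n : ℕ} (H : Matrix (Fin m) (Fin n) ℝ) (yl yu : Fin m → ℝ) :
    Set (Fin n → ℝ) :=
  {x | yl ≤ H.mulVec x ∧ H.mulVec x ≤ yu}

/-- LP-refinement lower bound `L_j = inf {(Hx)_j : y̲ ≤ Hx ≤ y̅}`. -/
noncomputable def lpLo {m n : ℕ} (H : Matrix (Fin m) (Fin n) ℝ)
    (yl yu : Fin m → ℝ) (j : Fin m) : ℝ :=
  sInf ((fun x => H.mulVec x j) '' feasible H yl yu)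

/-- LP-refinement upper bound `U_j = sup {(Hx)_j : y̲ ≤ Hx ≤ y̅}`. -/
noncomputable def lpHi {m n : ℕ} (H : Matrix (Fin m) (Fin n) ℝ)
    (yl yu : Fin m → ℝ) (j : Fin m) : ℝ :=
  sSup ((fun x => H.mulVec x j) '' feasible H yl yu)

lemma mul_mem_minmax {a lo hi t : ℝ} (h1 : lo ≤ t) (h2 : t ≤ hi) :
    min (a * lo) (a * hi) ≤ a * t ∧ a * t ≤ max (a * lo) (a * hi) := by
  rcases le_or_gt 0 a with ha | ha
  · exact ⟨min_le_of_left_le (by nlinarith), le_max_of_le_right (by nlinarith)⟩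
  · exact ⟨min_le_of_right_le (by nlinarith), le_max_of_le_left (by nlinarith)⟩

lemma neg_div_mem_minmax {a lo hi s : ℝ} (ha : a ≠ 0) (h1 : lo ≤ s) (h2 : s ≤ hi) :
    min (-lo / a) (-hi / a) ≤ -s / a ∧ -s / a ≤ max (-lo / a) (-hi / a) := by
  rcases ha.lt_or_gt with ha | ha
  · constructor
    · refine min_le_of_left_le ?_
      rw [div_le_div_right_of_neg ha]; linarith
    · refine le_max_of_le_right ?_
      rw [div_le_div_right_of_neg ha]; linarith
  · constructor
    · refine min_le_of_right_le ?_
      rw [div_le_div_iff_of_pos_right ha]; linarith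
    · refine le_max_of_le_left ?_
      rw [div_le_div_iff_of_pos_right ha]; linarith

/-- The LP refinement is at least as tight as the
sampling-strategy refinement: every feasible point `Hx` lies in
`I^{SS}_{H,A}([y̲,y̅])`, and componentwise `[L_j, U_j] ⊆ I^{SS}_{H,A}([y̲,y̅])_j`. -/
theorem lp_refinement_tighter_than_sampling {m n N : ℕ}
    (H : Matrix (Fin m) (Fin n) ℝ) (hH : H.rank = n)
    (A : Matrix (Fin N) (Fin m) ℝ) (hAH : A * H = 0)
    (yl yu : Fin m → ℝ) (hne : (feasible H yl yu).Nonempty) :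
    (∀ x ∈ feasible H yl yu, ∀ j : Fin m, H.mulVec x j ∈ refineSet A yl yu j) ∧
    (∀ j : Fin m,
      Set.Icc (lpLo H yl yu j) (lpHi H yl yu j) ⊆ refineSet A yl yu j) := by
  have part1 : ∀ x ∈ feasible H yl yu, ∀ j : Fin m,
      H.mulVec x j ∈ refineSet A yl yu j := by
    intro x hx j
    obtain ⟨hxl, hxu⟩ := hx
    set v := H.mulVec x with hv
    have h0 : A.mulVec v = 0 := by
      rw [hv, Matrix.mulVec_mulVec, hAH, Matrix.zero_mulVec]
    refine ⟨⟨hxl j, hxu j⟩, ?_⟩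
    simp only [Set.mem_iInter, Set.mem_setOf_eq]
    intro i hij
    have hsum : A i j * v j + ∑ k ∈ Finset.univ.erase j, A i k * v k = 0 := by
      have := congrFun h0 i
      rw [Matrix.mulVec, dotProduct] at this
      rw [← Finset.add_sum_erase Finset.univ (fun k => A i k * v k) (Finset.mem_univ j)] at this
      simpa using this
    set s := ∑ k ∈ Finset.univ.erase j, A i k * v k with hs
    have hlo : sumLo (A i) j yl yu ≤ s :=
      Finset.sum_le_sum fun k _ => (mul_mem_minmax (hxl k) (hxu k)).1
    have hhi : s ≤ sumHi (A i) j yl yu :=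
      Finset.sum_le_sum fun k _ => (mul_mem_minmax (hxl k) (hxu k)).2
    have hvj : v j = -s / A i j := by
      field_simp
      linarith
    rw [hvj]
    exact ⟨(neg_div_mem_minmax hij hlo hhi).1, (neg_div_mem_minmax hij hlo hhi).2⟩
  refine ⟨part1, ?_⟩
  intro j z hz
  set S := (fun x => H.mulVec x j) '' feasible H yl yu with hS
  have hSne : S.Nonempty := hne.image _
  have hSsub : ∀ w ∈ S, w ∈ refineSet A yl yu j := by
    rintro w ⟨x, hx, rfl⟩
    exact part1 x hx j
  have key : ∀ a b : ℝ, (∀ w ∈ S, a ≤ w ∧ w ≤ b) → a ≤ z ∧ z ≤ b := by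
    intro a b hab
    have h1 : a ≤ lpLo H yl yu j := le_csInf hSne fun w hw => (hab w hw).1
    have h2 : lpHi H yl yu j ≤ b := csSup_le hSne fun w hw => (hab w hw).2
    exact ⟨h1.trans hz.1, hz.2.trans h2⟩
  refine ⟨?_, ?_⟩
  · have := key (yl j) (yu j) fun w hw => (hSsub w hw).1
    exact ⟨this.1, this.2⟩
  · simp only [Set.mem_iInter, Set.mem_setOf_eq]
    intro i hij
    have := key (refineLo (A i) j yl yu) (refineHi (A i) j yl yu) fun w hw => by
      have h := (hSsub w hw).2
      simp only [Set.mem_iInter, Set.mem_setOf_eq] at h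
      exact h i hij
    exact ⟨this.1, this.2⟩
end
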